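/- arXiv:2207.01397 — 2 statements merged into one kernel-verified Lean document; each statement's English description precedes it below -/
import Mathlib

section
/- Consider a two-edge loop network with admissible set A ⊆ R²: for any j = (j_k, j_l) ∈ A with j_k, j_l ≥ 0, the vector j − (min(j_k,j_l))·(1,1) also lies in A. Suppose the costs satisfy c_k(j) + c_l(j) > 0 for all j. Then any Wardrop equilibrium j* = (j*_k, j*_l) satisfies the complementarity condition j*_k · j*_l = 0. -/
/-- On a two-edge loop network with positive total cost, any Wardrop equilibrium
satisfies the complementarity condition. -/
theorem wardrop_complementarity (A : Set (ℝ × ℝ)) (c : ℝ × ℝ → ℝ × ℝ)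
    (hAnn : ∀ j ∈ A, 0 ≤ j.1 ∧ 0 ≤ j.2)
    (hAloop : ∀ j ∈ A, (j.1 - min j.1 j.2, j.2 - min j.1 j.2) ∈ A)
    (hcost : ∀ j : ℝ × ℝ, 0 < (c j).1 + (c j).2)
    (jstar : ℝ × ℝ) (hjstar : jstar ∈ A)
    (hW : ∀ j ∈ A, (c jstar).1 * (jstar.1 - j.1) + (c jstar).2 * (jstar.2 - j.2) ≤ 0) :
    jstar.1 * jstar.2 = 0 := by
  have h := hW _ (hAloop jstar hjstar)
  simp only at h
  have hs := hcost jstar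
  obtain ⟨h1, h2⟩ := hAnn jstar hjstar
  rcases min_cases jstar.1 jstar.2 with ⟨he, _⟩ | ⟨he, _⟩ <;> rw [he] at h <;> nlinarith
end

section
/- Let H(x,p,m) be smooth with D_mH ≤ 0, and suppose the Lions monotonicity matrix [[−(2/m)D_mH, D²_{pm}H],[D²_{pm}H, 2D²_{pp}H]] is positive semidefinite at a point with m > 0. Then the quantity M = (D_pH)² + m·D_pH·D²_{pm}H − m·D_mH·D²_{pp}H satisfies M ≥ (A m²)/4 ≥ 0, where A = −(4/m)·D_mH·D²_{pp}H − (D²_{pm}H)² is the determinant of the Lions matrix. -/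
/-- Under the Lions monotonicity condition, the denominator
`M = (D_pH)² + m D_pH D²_{pm}H - m D_mH D²_{pp}H` satisfies `M ≥ A m²/4 ≥ 0`,
where `A` is the determinant of the Lions matrix. All derivatives are evaluated
at a fixed point and denoted by real numbers. -/
theorem lions_denominator_nonneg (m Hp Hm Hpm Hpp : ℝ) (hm : 0 < m)
    (hHm : Hm ≤ 0)
    (hPSD : (Matrix.of ![![-(2 / m) * Hm, Hpm], ![Hpm, 2 * Hpp]]).PosSemidef) :
    (-(4 / m) * Hm * Hpp - Hpm ^ 2) * m ^ 2 / 4 ≤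
      Hp ^ 2 + m * Hp * Hpm - m * Hm * Hpp ∧
    0 ≤ (-(4 / m) * Hm * Hpp - Hpm ^ 2) * m ^ 2 / 4 := by
  have hm0 : m ≠ 0 := hm.ne'
  have key : ∀ v0 v1 : ℝ,
      0 ≤ v0 * (-(2 / m) * Hm * v0 + Hpm * v1) + v1 * (Hpm * v0 + 2 * Hpp * v1) := by
    intro v0 v1
    have := hPSD.dotProduct_mulVec_nonneg ![v0, v1]
    simpa [Matrix.mulVec, dotProduct, Fin.sum_univ_two, mul_comm] using this
  have mkey : ∀ v0 v1 : ℝ,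
      0 ≤ -2 * Hm * v0 ^ 2 + 2 * m * Hpm * v0 * v1 + 2 * m * Hpp * v1 ^ 2 := by
    intro v0 v1
    have h := mul_nonneg hm.le (key v0 v1)
    have heq : m * (v0 * (-(2 / m) * Hm * v0 + Hpm * v1) + v1 * (Hpm * v0 + 2 * Hpp * v1))
        = -2 * Hm * v0 ^ 2 + 2 * m * Hpm * v0 * v1 + 2 * m * Hpp * v1 ^ 2 := by
      field_simp; ring
    linarith [heq ▸ h]
  have hc : 0 ≤ Hpp := by have := key 0 1; nlinarith
  have hA' : 0 ≤ -4 * Hm * Hpp - m * Hpm ^ 2 := by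
    rcases lt_or_eq_of_le hc with hc' | hc'
    · have h := mkey (2 * Hpp) (-Hpm)
      nlinarith
    · have hpp0 : Hpp = 0 := hc'.symm
      have hb : Hpm = 0 := by
        have hsq : Hpm ^ 2 ≤ 0 := by
          rcases lt_or_eq_of_le hHm with hHm' | hHm'
          · have h := mkey (m * Hpm) (2 * Hm)
            rw [hpp0] at h
            have h4 : 0 ≤ Hm * Hpm ^ 2 := by nlinarith [mul_pos hm hm]
            nlinarith
          · have h := mkey (-Hpm) 1
            rw [hpp0, ← hHm'] at h
            nlinarith
        have := sq_nonneg Hpm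
        have : Hpm ^ 2 = 0 := le_antisymm hsq this
        exact pow_eq_zero_iff (n := 2) (by norm_num) |>.mp this
      rw [hpp0, hb]; ring_nf; exact le_refl 0
  have heq2 : (-(4 / m) * Hm * Hpp - Hpm ^ 2) * m ^ 2 / 4
      = (-4 * Hm * Hpp - m * Hpm ^ 2) * m / 4 := by
    field_simp
  constructor
  · rw [heq2]; nlinarith [sq_nonneg (Hp + m * Hpm / 2)]
  · rw [heq2]; positivity
end
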